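/- arXiv:math/0610888 — 3 statements merged into one kernel-verified Lean document; each statement's English description precedes it below -/
import Mathlib

section
/- Let T₁ and T₂ be commuting bounded operators on a complex Hilbert space H such that the pair (T₁,T₂) is jointly hyponormal, and suppose that for some integers m ≥ 1 and n ≥ 1 the pair (T₁^m, T₂^n) is normal, i.e., T₁^m and T₂^n are commuting normal operators. Then (T₁,T₂) is a normal pair: T₁ and T₂ are normal and commute. -/
open MeasureTheory ContinuousLinearMap
open scoped ComplexOrder ENNReal

noncomputable section

universe u

/-- A pair `(T₁, T₂)` of bounded operators on a complex Hilbert space is (jointly)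
hyponormal if `Σ_{i,j∈{1,2}} ⟨(T_j*T_i − T_iT_j*)h_j, h_i⟩ ≥ 0` for all `h₁, h₂`. -/
def JointlyHyponormal {H : Type u} [NormedAddCommGroup H] [InnerProductSpace ℂ H]
    [CompleteSpace H] (T₁ T₂ : H →L[ℂ] H) : Prop :=
  ∀ h₁ h₂ : H,
    0 ≤ (inner ℂ (((adjoint T₁).comp T₁ - T₁.comp (adjoint T₁)) h₁) h₁ : ℂ)
      + (inner ℂ (((adjoint T₂).comp T₁ - T₁.comp (adjoint T₂)) h₂) h₁ : ℂ)
      + (inner ℂ (((adjoint T₁).comp T₂ - T₂.comp (adjoint T₁)) h₁) h₂ : ℂ)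
      + (inner ℂ (((adjoint T₂).comp T₂ - T₂.comp (adjoint T₂)) h₂) h₂ : ℂ)

/-- A bounded operator `T` on a complex Hilbert space `H` is subnormal if there are a
complex Hilbert space `K`, an isometry `V : H → K` and a normal operator `N` on `K`
with `N V = V T`. -/
def Subnormal {H : Type u} [NormedAddCommGroup H] [InnerProductSpace ℂ H]
    (T : H →L[ℂ] H) : Prop :=
  ∃ (K : Type u) (_ : NormedAddCommGroup K) (_ : InnerProductSpace ℂ K)
    (_ : CompleteSpace K) (V : H →L[ℂ] K) (N : K →L[ℂ] K),
    Isometry V ∧ (adjoint N).comp N = N.comp (adjoint N) ∧ N.comp V = V.comp T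

/-- A pair `(T₁, T₂)` is subnormal if it lifts to a commuting pair of normal operators. -/
def SubnormalPair {H : Type u} [NormedAddCommGroup H] [InnerProductSpace ℂ H]
    (T₁ T₂ : H →L[ℂ] H) : Prop :=
  ∃ (K : Type u) (_ : NormedAddCommGroup K) (_ : InnerProductSpace ℂ K)
    (_ : CompleteSpace K) (V : H →L[ℂ] K) (N₁ N₂ : K →L[ℂ] K),
    Isometry V ∧ N₁.comp N₂ = N₂.comp N₁ ∧
    (adjoint N₁).comp N₁ = N₁.comp (adjoint N₁) ∧
    (adjoint N₂).comp N₂ = N₂.comp (adjoint N₂) ∧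
    N₁.comp V = V.comp T₁ ∧ N₂.comp V = V.comp T₂

/-- `μ` is the Berger measure of the unilateral weighted shift with weights `c` :
a compactly supported Borel probability measure on `[0,∞)` whose `n`-th moment is
`c₀² ⋯ c_{n-1}²`. -/
def IsBergerMeasure (c : ℕ → ℝ) (μ : Measure ℝ) : Prop :=
  IsProbabilityMeasure μ ∧ μ {t | t < 0} = 0 ∧ (∃ M : ℝ, μ {t | M < t} = 0) ∧
    ∀ n : ℕ, 1 ≤ n → ∫ t, t ^ n ∂μ = ∏ i ∈ Finset.range n, (c i) ^ 2

/-!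
Joint hyponormality makes each `Tᵢ` hyponormal, so it suffices to show, in a C⋆-algebra, that a
hyponormal `a` with `a ^ m` normal is normal. Let `G = (a ^ m)⋆ a ^ m`. By Fuglede's theorem `a`
and `a⋆` commute with `G`, so for `δ > 0` the element `x = a (G + δ)^(-1/(2m))` is again
hyponormal, and `x ^ m (x ^ m)⋆ = (x ^ m)⋆ x ^ m = G (G + δ)⁻¹` has norm at most `1`. Hyponormal
elements are normaloid (`‖x ^ m‖ = ‖x‖ ^ m`), so `x` is a contraction. Conjugating `x⋆x ≤ 1` and
`x x⋆ ≥ x ^ m (x ^ m)⋆` by `(G + δ)^(1/(2m))` squeezes the self-commutator: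
`0 ≤ a⋆a - a a⋆ ≤ (G + δ)^(1/m) - G (G + δ)^(1/m - 1) = δ (G + δ)^(1/m - 1)`,
which has norm at most `δ^(1/m)`. Letting `δ → 0` gives `a⋆a = a a⋆`.
-/

section Algebra

variable {R : Type*}

def IsHyponormal [Mul R] [Star R] [LE R] (a : R) : Prop := a * star a ≤ star a * a

section StarMul

variable [Semigroup R] [StarMul R] {b u : R}

lemma star_mul_mul_self_of_commute (hu : IsSelfAdjoint u) (hbu : Commute b u) :
    star (b * u) * (b * u) = star b * b * (u * u) := by
  have hsbu : Commute (star b) u := by simpa only [hu.star_eq] using hbu.star_star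
  calc star (b * u) * (b * u) = u * (star b * b) * u := by
        rw [star_mul, hu.star_eq]; simp only [mul_assoc]
    _ = star b * b * (u * u) := by rw [← (hsbu.mul_left hbu).eq, mul_assoc]

lemma mul_self_mul_star_of_commute (hu : IsSelfAdjoint u) (hbu : Commute b u) :
    (b * u) * star (b * u) = b * star b * (u * u) := by
  have hsbu : Commute (star b) u := by simpa only [hu.star_eq] using hbu.star_star
  calc (b * u) * star (b * u) = b * ((u * u) * star b) := by
        rw [star_mul, hu.star_eq]; simp only [mul_assoc]
    _ = b * star b * (u * u) := by rw [← (hsbu.mul_right hsbu).eq, mul_assoc]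

end StarMul

section StarOrderedRing

variable [Semiring R] [PartialOrder R] [StarRing R] [StarOrderedRing R]

lemma pow_succ_mul_star_le_mul_star {x : R} (hx : x * star x ≤ 1) (k : ℕ) :
    x ^ (k + 1) * star (x ^ (k + 1)) ≤ x * star x := by
  induction k with
  | zero => simp
  | succ k ih =>
    calc x ^ (k + 2) * star (x ^ (k + 2)) = x * (x ^ (k + 1) * star (x ^ (k + 1))) * star x := by
          rw [pow_succ' x (k + 1), star_mul]; simp only [mul_assoc]
      _ ≤ x * 1 * star x := star_right_conjugate_le_conjugate (ih.trans hx) x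
      _ = x * star x := by rw [mul_one]

lemma IsHyponormal.mul_of_commute {a c : R} (ha : IsHyponormal a) (hc : IsSelfAdjoint c)
    (hac : Commute a c) : IsHyponormal (a * c) := by
  have hsac : Commute (star a) c := by simpa only [hc.star_eq] using hac.star_star
  calc (a * c) * star (a * c) = c * (a * star a) * c := by
        rw [star_mul, hc.star_eq, ← hsac.eq, hac.eq]; simp only [mul_assoc]
    _ ≤ c * (star a * a) * c := hc.conjugate_le_conjugate ha
    _ = star (a * c) * (a * c) := by rw [star_mul, hc.star_eq]; simp only [mul_assoc]

end StarOrderedRing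

end Algebra

section CStarAlgebra

variable {A : Type*}

lemma IsStarNormal.commute_star_mul_self [NonUnitalCStarAlgebra A] {b x : A}
    (hb : IsStarNormal b) (h : Commute b x) : Commute (star b * b) x :=
  (hb.commute_star_left h).mul_left h

variable [CStarAlgebra A] [PartialOrder A] [StarOrderedRing A]

lemma star_mul_mul_le_of_norm_le_one {x : A} (hx : ‖x‖ ≤ 1) (c : A) :
    star (x * c) * (x * c) ≤ star c * c := by
  have hxx : star x * x ≤ 1 := by
    rwa [← CStarAlgebra.norm_le_one_iff_of_nonneg _ (star_mul_self_nonneg x),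
      CStarRing.norm_star_mul_self, ← sq, sq_le_one_iff₀ (norm_nonneg _)]
  calc star (x * c) * (x * c) = star c * (star x * x) * c := by
        rw [star_mul]; simp only [mul_assoc]
    _ ≤ star c * 1 * c := star_left_conjugate_le_conjugate hxx c
    _ = star c * c := by rw [mul_one]

lemma mul_pow_mul_star_le_of_norm_le_one {x : A} (hx : ‖x‖ ≤ 1) (c : A) {m : ℕ} (hm : m ≠ 0) :
    c * (x ^ m * star (x ^ m)) * star c ≤ (c * x) * star (c * x) := by
  have hxx : x * star x ≤ 1 := by
    rwa [← CStarAlgebra.norm_le_one_iff_of_nonneg _ (mul_star_self_nonneg x),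
      CStarRing.norm_self_mul_star, ← sq, sq_le_one_iff₀ (norm_nonneg _)]
  obtain ⟨k, rfl⟩ := Nat.exists_eq_succ_of_ne_zero hm
  calc c * (x ^ (k + 1) * star (x ^ (k + 1))) * star c ≤ c * (x * star x) * star c :=
        star_right_conjugate_le_conjugate (pow_succ_mul_star_le_mul_star hxx k) c
    _ = (c * x) * star (c * x) := by rw [star_mul]; simp only [mul_assoc]

namespace IsHyponormal

variable {a : A}

lemma norm_star_mul_le (ha : IsHyponormal a) (b : A) : ‖star a * b‖ ≤ ‖a * b‖ := by
  refine (pow_le_pow_iff_left₀ (norm_nonneg _) (norm_nonneg _) two_ne_zero).mp ?_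
  rw [sq, sq, ← CStarRing.norm_star_mul_self, ← CStarRing.norm_star_mul_self (x := a * b)]
  refine CStarAlgebra.norm_le_norm_of_nonneg_of_le (star_mul_self_nonneg _) ?_
  simpa only [star_mul, star_star, mul_assoc] using star_left_conjugate_le_conjugate ha b

lemma sq_norm_pow_succ_le (ha : IsHyponormal a) (k : ℕ) :
    ‖a ^ (k + 1)‖ ^ 2 ≤ ‖a ^ (k + 2)‖ * ‖a ^ k‖ :=
  calc ‖a ^ (k + 1)‖ ^ 2 = ‖star (a ^ k) * (star a * a ^ (k + 1))‖ := by
        rw [sq, ← CStarRing.norm_star_mul_self, pow_succ' a k, star_mul, ← pow_succ', mul_assoc]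
    _ ≤ ‖a ^ k‖ * ‖a * a ^ (k + 1)‖ :=
        (norm_mul_le _ _).trans (by rw [norm_star]; gcongr; exact ha.norm_star_mul_le _)
    _ = ‖a ^ (k + 2)‖ * ‖a ^ k‖ := by rw [← pow_succ', mul_comm]

lemma norm_pow [Nontrivial A] (ha : IsHyponormal a) (n : ℕ) : ‖a ^ n‖ = ‖a‖ ^ n := by
  suffices ∀ k, ‖a ^ k‖ = ‖a‖ ^ k ∧ ‖a ^ (k + 1)‖ = ‖a‖ ^ (k + 1) from (this n).1
  intro k
  induction k with
  | zero => simp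
  | succ k ih =>
    refine ⟨ih.2, le_antisymm (norm_pow_le _ _) ?_⟩
    rcases (norm_nonneg a).eq_or_lt with h0 | hpos
    · rw [← h0, zero_pow (by omega)]; exact norm_nonneg _
    refine le_of_mul_le_mul_right ?_ (pow_pos hpos k)
    calc ‖a‖ ^ (k + 2) * ‖a‖ ^ k = ‖a ^ (k + 1)‖ ^ 2 := by rw [ih.2]; ring
      _ ≤ ‖a ^ (k + 2)‖ * ‖a‖ ^ k := by rw [← ih.1]; exact ha.sq_norm_pow_succ_le k

end IsHyponormal

def shiftedRpow (G : A) (δ r : ℝ) : A := cfc (fun t : ℝ => (t + δ) ^ r) G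

section shiftedRpow

variable {G : A} {δ : ℝ}

lemma continuousOn_add_rpow_spectrum (hG : 0 ≤ G) (hδ : 0 < δ) (r : ℝ) :
    ContinuousOn (fun t : ℝ => (t + δ) ^ r) (spectrum ℝ G) :=
  (continuous_add_const δ).continuousOn.rpow_const fun t ht =>
    Or.inl (by have := spectrum_nonneg_of_nonneg hG ht; positivity)

lemma shiftedRpow_mul_shiftedRpow (hG : 0 ≤ G) (hδ : 0 < δ) (r s : ℝ) :
    shiftedRpow G δ r * shiftedRpow G δ s = shiftedRpow G δ (r + s) := by
  rw [shiftedRpow, shiftedRpow, ← cfc_mul _ _ G (continuousOn_add_rpow_spectrum hG hδ r)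
    (continuousOn_add_rpow_spectrum hG hδ s)]
  refine cfc_congr fun t ht => ?_
  have := spectrum_nonneg_of_nonneg hG ht
  exact (Real.rpow_add (by positivity) r s).symm

lemma shiftedRpow_zero (hG : 0 ≤ G) : shiftedRpow G δ 0 = 1 := by
  simp only [shiftedRpow, Real.rpow_zero]
  exact cfc_const_one ℝ G

lemma shiftedRpow_pow (hG : 0 ≤ G) (hδ : 0 < δ) (r : ℝ) (k : ℕ) :
    shiftedRpow G δ r ^ k = shiftedRpow G δ (k * r) := by
  induction k with
  | zero => simp [shiftedRpow_zero hG]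
  | succ k ih =>
    rw [pow_succ, ih, shiftedRpow_mul_shiftedRpow hG hδ]
    push_cast; ring_nf

lemma shiftedRpow_pow_mul_self (hG : 0 ≤ G) (hδ : 0 < δ) {m : ℕ} (hm : m ≠ 0) :
    shiftedRpow G δ (-(2 * m : ℝ)⁻¹) ^ m * shiftedRpow G δ (-(2 * m : ℝ)⁻¹) ^ m =
      shiftedRpow G δ (-1) := by
  rw [← pow_add, shiftedRpow_pow hG hδ]
  congr 1
  field_simp
  push_cast
  ring

lemma mul_shiftedRpow (hG : 0 ≤ G) (hδ : 0 < δ) (r : ℝ) :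
    G * shiftedRpow G δ r = cfc (fun t : ℝ => t * (t + δ) ^ r) G := by
  rw [shiftedRpow, cfc_mul (fun t : ℝ => t) _ G continuousOn_id
    (continuousOn_add_rpow_spectrum hG hδ r), cfc_id' ℝ G]

lemma norm_mul_shiftedRpow_neg_one_le (hG : 0 ≤ G) (hδ : 0 < δ) :
    ‖G * shiftedRpow G δ (-1)‖ ≤ 1 := by
  rw [mul_shiftedRpow hG hδ]
  refine norm_cfc_le zero_le_one fun t ht => ?_
  have ht0 := spectrum_nonneg_of_nonneg hG ht
  rw [Real.rpow_neg_one, Real.norm_eq_abs, abs_of_nonneg (by positivity),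
    mul_inv_le_iff₀ (by positivity)]
  linarith

lemma norm_shiftedRpow_sub_mul_le (hG : 0 ≤ G) (hδ : 0 < δ) {p : ℝ} (hp : p ≤ 1) :
    ‖shiftedRpow G δ p - G * shiftedRpow G δ (p - 1)‖ ≤ δ ^ p := by
  rw [mul_shiftedRpow hG hδ, shiftedRpow, ← cfc_sub (fun t : ℝ => (t + δ) ^ p)
    (fun t : ℝ => t * (t + δ) ^ (p - 1)) G (continuousOn_add_rpow_spectrum hG hδ p)
    (continuousOn_id.mul (continuousOn_add_rpow_spectrum hG hδ (p - 1)))]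
  refine norm_cfc_le (by positivity) fun t ht => ?_
  have ht0 := spectrum_nonneg_of_nonneg hG ht
  have hpos : 0 < t + δ := by positivity
  have key : (t + δ) ^ p - t * (t + δ) ^ (p - 1) = δ * (t + δ) ^ (p - 1) := by
    rw [Real.rpow_sub_one hpos.ne']; field_simp; ring
  have hδp : δ * δ ^ (p - 1) = δ ^ p := by
    rw [Real.rpow_sub_one hδ.ne']; field_simp
  rw [key, Real.norm_eq_abs, abs_of_nonneg (by positivity), ← hδp]
  exact mul_le_mul_of_nonneg_left
    (Real.rpow_le_rpow_of_nonpos hδ (by linarith) (by linarith)) hδ.le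

end shiftedRpow

namespace IsHyponormal

variable {a G : A}

lemma norm_mul_shiftedRpow_le_one (ha : IsHyponormal a) {m : ℕ} (hm : m ≠ 0)
    (hGa : Commute G a) (hG : star (a ^ m) * a ^ m = G) {δ : ℝ} (hδ : 0 < δ) :
    ‖a * shiftedRpow G δ (-(2 * m : ℝ)⁻¹)‖ ≤ 1 := by
  nontriviality A
  have hG₀ : 0 ≤ G := hG ▸ star_mul_self_nonneg _
  set c := shiftedRpow G δ (-(2 * m : ℝ)⁻¹) with hc
  have hc_sa : IsSelfAdjoint c := cfc_predicate _ _
  have hca : Commute a c := (hGa.cfc_real _).symm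
  have hxm : ‖(a * c) ^ m‖ ≤ 1 := by
    have := norm_mul_shiftedRpow_neg_one_le hG₀ hδ
    rwa [← shiftedRpow_pow_mul_self hG₀ hδ hm, ← hc, ← hG,
      ← star_mul_mul_self_of_commute (hc_sa.pow m) (hca.pow_pow m m), ← hca.mul_pow,
      CStarRing.norm_star_mul_self, ← sq, sq_le_one_iff₀ (norm_nonneg _)] at this
  rw [(ha.mul_of_commute hc_sa hca).norm_pow m] at hxm
  exact (pow_le_one_iff_of_nonneg (norm_nonneg _) hm).mp hxm

lemma norm_selfCommutator_le (ha : IsHyponormal a) {m : ℕ} (hm : m ≠ 0) (hGa : Commute G a)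
    (hG : star (a ^ m) * a ^ m = G) (hG' : a ^ m * star (a ^ m) = G) {δ : ℝ} (hδ : 0 < δ) :
    ‖star a * a - a * star a‖ ≤ δ ^ (m⁻¹ : ℝ) := by
  have hG₀ : 0 ≤ G := hG ▸ star_mul_self_nonneg _
  have hx := ha.norm_mul_shiftedRpow_le_one hm hGa hG hδ
  set c := shiftedRpow G δ (-(2 * m : ℝ)⁻¹) with hc
  set c' := shiftedRpow G δ (2 * m : ℝ)⁻¹ with hc'
  have hc_sa : IsSelfAdjoint c := cfc_predicate _ _
  have hc'_sa : IsSelfAdjoint c' := cfc_predicate _ _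
  have hca : Commute a c := (hGa.cfc_real _).symm
  have hc'a : Commute c' a := hGa.cfc_real _
  have hc'G : Commute c' G := (Commute.refl G).cfc_real _
  have hax : a * c * c' = a := by
    rw [mul_assoc, hc, hc', shiftedRpow_mul_shiftedRpow hG₀ hδ, neg_add_cancel,
      shiftedRpow_zero hG₀, mul_one]
  have hxa : c' * (a * c) = a := by
    rw [← mul_assoc, hc'a.eq, mul_assoc, hc, hc', shiftedRpow_mul_shiftedRpow hG₀ hδ,
      add_neg_cancel, shiftedRpow_zero hG₀, mul_one]
  have hc'c' : c' * c' = shiftedRpow G δ m⁻¹ := by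
    rw [hc', shiftedRpow_mul_shiftedRpow hG₀ hδ, ← two_mul, mul_inv, ← mul_assoc,
      mul_inv_cancel₀ two_ne_zero, one_mul]
  have hK : (a * c) ^ m * star ((a * c) ^ m) = G * shiftedRpow G δ (-1) := by
    rw [hca.mul_pow, mul_self_mul_star_of_commute (hc_sa.pow m) (hca.pow_pow m m), hG',
      shiftedRpow_pow_mul_self hG₀ hδ hm]
  have hc'Kc' : c' * (G * shiftedRpow G δ (-1)) * c' = G * shiftedRpow G δ ((m : ℝ)⁻¹ - 1) := by
    rw [← mul_assoc, hc'G.eq, mul_assoc, mul_assoc, hc', shiftedRpow_mul_shiftedRpow hG₀ hδ,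
      shiftedRpow_mul_shiftedRpow hG₀ hδ]
    congr 2
    field_simp
    ring
  have upper : star a * a ≤ shiftedRpow G δ m⁻¹ := by
    simpa only [hax, hc'_sa.star_eq, hc'c'] using star_mul_mul_le_of_norm_le_one hx c'
  have lower : G * shiftedRpow G δ ((m : ℝ)⁻¹ - 1) ≤ a * star a := by
    simpa only [hxa, hc'_sa.star_eq, hK, hc'Kc'] using mul_pow_mul_star_le_of_norm_le_one hx c' hm
  calc ‖star a * a - a * star a‖
      ≤ ‖shiftedRpow G δ m⁻¹ - G * shiftedRpow G δ ((m : ℝ)⁻¹ - 1)‖ :=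
        CStarAlgebra.norm_le_norm_of_nonneg_of_le (sub_nonneg.2 ha) (sub_le_sub upper lower)
    _ ≤ δ ^ (m⁻¹ : ℝ) :=
        norm_shiftedRpow_sub_mul_le hG₀ hδ
          (inv_le_one_of_one_le₀ (by exact_mod_cast Nat.one_le_iff_ne_zero.mpr hm))

theorem isStarNormal_of_isStarNormal_pow (ha : IsHyponormal a) {m : ℕ} (hm : m ≠ 0)
    (hN : IsStarNormal (a ^ m)) : IsStarNormal a := by
  have hGa := hN.commute_star_mul_self (Commute.self_pow a m).symm
  have hG' : a ^ m * star (a ^ m) = star (a ^ m) * a ^ m := hN.star_comm_self.eq.symm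
  have hsmall : ‖star a * a - a * star a‖ ≤ 0 := by
    refine le_of_forall_pos_le_add fun ε hε => ?_
    simpa [Real.pow_rpow_inv_natCast hε.le hm] using
      ha.norm_selfCommutator_le hm hGa rfl hG' (pow_pos hε m)
  exact ⟨sub_eq_zero.mp (norm_le_zero_iff.mp hsmall)⟩

end IsHyponormal

end CStarAlgebra

section Hilbert

variable {H : Type*} [NormedAddCommGroup H] [InnerProductSpace ℂ H] [CompleteSpace H]

open scoped InnerProductSpace

lemma ContinuousLinearMap.isHyponormal_iff_inner_nonneg (T : H →L[ℂ] H) :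
    IsHyponormal T ↔ ∀ x, 0 ≤ ⟪((adjoint T).comp T - T.comp (adjoint T)) x, x⟫_ℂ := by
  rw [IsHyponormal, ← sub_nonneg, nonneg_iff_isPositive, isPositive_iff',
    and_iff_right ((IsSelfAdjoint.star_mul_self T).sub (IsSelfAdjoint.mul_star_self T))]
  rfl

lemma JointlyHyponormal.isHyponormal_left {T₁ T₂ : H →L[ℂ] H} (h : JointlyHyponormal T₁ T₂) :
    IsHyponormal T₁ :=
  T₁.isHyponormal_iff_inner_nonneg.mpr fun x => by simpa using h x 0

lemma JointlyHyponormal.isHyponormal_right {T₁ T₂ : H →L[ℂ] H} (h : JointlyHyponormal T₁ T₂) :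
    IsHyponormal T₂ :=
  T₂.isHyponormal_iff_inner_nonneg.mpr fun x => by simpa using h 0 x

end Hilbert

theorem normal_of_hyponormal_with_normal_powers_general
    {H : Type} [NormedAddCommGroup H] [InnerProductSpace ℂ H] [CompleteSpace H]
    (T₁ T₂ : H →L[ℂ] H) (hcomm : T₁ * T₂ = T₂ * T₁)
    (hhypo : JointlyHyponormal T₁ T₂) (m n : ℕ) (hm : 1 ≤ m) (hn : 1 ≤ n)
    (hN₁ : adjoint (T₁ ^ m) * T₁ ^ m = T₁ ^ m * adjoint (T₁ ^ m))
    (hN₂ : adjoint (T₂ ^ n) * T₂ ^ n = T₂ ^ n * adjoint (T₂ ^ n)) :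
    adjoint T₁ * T₁ = T₁ * adjoint T₁ ∧ adjoint T₂ * T₂ = T₂ * adjoint T₂ ∧
      T₁ * T₂ = T₂ * T₁ := by
  have hT₁ := hhypo.isHyponormal_left.isStarNormal_of_isStarNormal_pow (by omega) ⟨hN₁⟩
  have hT₂ := hhypo.isHyponormal_right.isStarNormal_of_isStarNormal_pow (by omega) ⟨hN₂⟩
  exact ⟨hT₁.star_comm_self.eq, hT₂.star_comm_self.eq, hcomm⟩

/-- Proposition 4.1: a jointly hyponormal pair with a normal power pair is normal. -/
theorem normal_of_hyponormal_with_normal_powers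
    {H : Type} [NormedAddCommGroup H] [InnerProductSpace ℂ H] [CompleteSpace H]
    (T₁ T₂ : H →L[ℂ] H) (hcomm : T₁ * T₂ = T₂ * T₁)
    (hhypo : JointlyHyponormal T₁ T₂) (m n : ℕ) (hm : 1 ≤ m) (hn : 1 ≤ n)
    (hpowcomm : T₁ ^ m * T₂ ^ n = T₂ ^ n * T₁ ^ m)
    (hN₁ : adjoint (T₁ ^ m) * T₁ ^ m = T₁ ^ m * adjoint (T₁ ^ m))
    (hN₂ : adjoint (T₂ ^ n) * T₂ ^ n = T₂ ^ n * adjoint (T₂ ^ n)) :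
    adjoint T₁ * T₁ = T₁ * adjoint T₁ ∧ adjoint T₂ * T₂ = T₂ * adjoint T₂ ∧
      T₁ * T₂ = T₂ * T₁ :=
  normal_of_hyponormal_with_normal_powers_general T₁ T₂ hcomm hhypo m n hm hn hN₁ hN₂

end
end

section
/- Let U₊ be the unilateral (unweighted) shift on ℓ²(ℤ₊) and consider the operators T₁ := U₊ ⊕ 0 and T₂ := 0 ⊕ U₊ on H := ℓ²(ℤ₊) ⊕ ℓ²(ℤ₊), where 0 denotes the zero operator. Then T₁ and T₂ commute, the pair (T₁,T₂) is subnormal, and for all m ≥ 1, n ≥ 1 the operator T₁^m T₂^n (= 0) is normal; nevertheless (T₁,T₂) is not a normal pair (indeed T₁ is not normal). -/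
open MeasureTheory ContinuousLinearMap
open scoped ComplexOrder ENNReal

noncomputable section

universe u

/-!
`U₊ ⊕ 0` and `0 ⊕ U₊` are the restrictions of `W ⊕ 0` and `0 ⊕ W` on `ℓ²(ℤ ⊕ ℤ)`, where `W` is
the bilateral shift. Both are partial permutations of a Hilbert basis `b` (`b i ↦ b (σ i)` on an
index set `s`, `b i ↦ 0` off it); the adjoint of such an operator is the partial permutation
`(σ⁻¹, σ '' s)`, so it is normal as soon as `σ` preserves `s`, and the two extensions multiply to
zero in either order. All monomials `T₁^m T₂^n` vanish because `T₁ T₂ = 0`, while `T₁` is not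
normal: `T₁*` kills `e (inl 0)`, which is orthogonal to the range of `T₁`, but `T₁` does not.
-/

open scoped InnerProductSpace

theorem pow_mul_pow_eq_zero_of_mul_eq_zero {M : Type*} [MonoidWithZero M] {a b : M}
    (h : a * b = 0) {m n : ℕ} (hm : 0 < m) (hn : 0 < n) : a ^ m * b ^ n = 0 := by
  obtain ⟨m, rfl⟩ := Nat.exists_eq_add_one_of_ne_zero hm.ne'
  obtain ⟨n, rfl⟩ := Nat.exists_eq_add_one_of_ne_zero hn.ne'
  rw [pow_succ, pow_succ', mul_assoc, ← mul_assoc a, h, zero_mul, mul_zero]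

namespace HilbertBasis

variable {ι 𝕜 E F : Type*} [RCLike 𝕜] [NormedAddCommGroup E] [InnerProductSpace 𝕜 E]
  [NormedAddCommGroup F] [InnerProductSpace 𝕜 F]

theorem ext_continuousLinearMap (b : HilbertBasis ι 𝕜 E) {A B : E →L[𝕜] F}
    (h : ∀ i, A (b i) = B (b i)) : A = B :=
  ContinuousLinearMap.ext_on (Submodule.dense_iff_topologicalClosure_eq_top.2 b.dense_span)
    (Set.forall_mem_range.2 h)

theorem ext_inner_left (b : HilbertBasis ι 𝕜 E) {x y : E}
    (h : ∀ i, ⟪b i, x⟫_𝕜 = ⟪b i, y⟫_𝕜) : x = y :=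
  b.repr.injective <| lp.ext <| funext fun i => by simp only [HilbertBasis.repr_apply_apply, h]

def linearIsometryOfOrthonormal [CompleteSpace F] (b : HilbertBasis ι 𝕜 E)
    {v : ι → F} (hv : Orthonormal 𝕜 v) : E →ₗᵢ[𝕜] F :=
  hv.orthogonalFamily.linearIsometry.comp b.repr.toLinearIsometry

@[simp] theorem linearIsometryOfOrthonormal_apply_self [CompleteSpace F]
    (b : HilbertBasis ι 𝕜 E) {v : ι → F} (hv : Orthonormal 𝕜 v) (i : ι) :
    b.linearIsometryOfOrthonormal hv (b i) = v i := by
  classical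
  simp [linearIsometryOfOrthonormal, b.repr_self, OrthogonalFamily.linearIsometry_apply_single]

variable [CompleteSpace E]

theorem adjoint_apply_eq_zero (b : HilbertBasis ι 𝕜 E) {T : E →L[𝕜] E} {x : E}
    (h : ∀ i, ⟪T (b i), x⟫_𝕜 = 0) : adjoint T x = 0 :=
  b.ext_inner_left fun i => by rw [adjoint_inner_right, h, inner_zero_right]

/-- `(span (b '' sᶜ))ᗮ` is the closed span of `b '' s`; as an orthogonal complement it comes
with an orthogonal projection. -/
def permOn (b : HilbertBasis ι 𝕜 E) (σ : ι ≃ ι) (s : Set ι) : E →L[𝕜] E :=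
  (b.linearIsometryOfOrthonormal (b.orthonormal.comp σ σ.injective)).toContinuousLinearMap ∘L
    (Submodule.span 𝕜 (b '' sᶜ))ᗮ.starProjection

variable (b : HilbertBasis ι 𝕜 E) (σ τ : ι ≃ ι) (s t : Set ι)

@[simp] theorem permOn_apply_self (i : ι) :
    b.permOn σ s (b i) = s.indicator (fun i => b (σ i)) i := by
  by_cases hi : i ∈ s
  · have hmem : b i ∈ (Submodule.span 𝕜 (b '' sᶜ))ᗮ := by
      refine (Submodule.isOrtho_span.2 ?_).le (Submodule.mem_span_singleton_self (b i))
      rintro _ rfl _ ⟨j, hj, rfl⟩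
      exact b.orthonormal.2 (ne_of_mem_of_not_mem hi hj)
    simp [permOn, Submodule.starProjection_eq_self_iff.2 hmem, hi]
  · have hmem : b i ∈ (Submodule.span 𝕜 (b '' sᶜ))ᗮᗮ :=
      Submodule.le_orthogonal_orthogonal _ (Submodule.subset_span ⟨i, hi, rfl⟩)
    simp [permOn, (Submodule.starProjection_apply_eq_zero_iff _).2 hmem, hi]

theorem permOn_comp_permOn :
    b.permOn τ t ∘L b.permOn σ s = b.permOn (σ.trans τ) (s ∩ σ ⁻¹' t) :=
  b.ext_continuousLinearMap fun i => by
    by_cases hi : i ∈ s <;> by_cases ht : σ i ∈ t <;> simp [hi, ht]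

theorem permOn_empty : b.permOn σ ∅ = 0 :=
  b.ext_continuousLinearMap fun i => by simp

theorem adjoint_permOn : adjoint (b.permOn σ s) = b.permOn σ.symm (σ '' s) := by
  classical
  refine b.ext_continuousLinearMap fun j => b.ext_inner_left fun i => ?_
  rw [adjoint_inner_right]
  simp only [permOn_apply_self, Set.indicator_apply, σ.image_eq_preimage_symm]
  have hb := orthonormal_iff_ite.1 b.orthonormal
  split_ifs with hi hj hj <;>
    simp only [hb, ← σ.eq_symm_apply, inner_zero_left, inner_zero_right]
  · rw [if_neg]; rintro rfl; exact hj hi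
  · rw [if_neg]; rintro rfl; exact hi hj

variable {σ s}

theorem commute_adjoint_permOn (hs : σ '' s = s) :
    adjoint (b.permOn σ s) ∘L b.permOn σ s = b.permOn σ s ∘L adjoint (b.permOn σ s) := by
  have hpre : σ ⁻¹' s = s := by nth_rw 1 [← hs]; exact σ.preimage_image s
  rw [adjoint_permOn, permOn_comp_permOn, permOn_comp_permOn, hs, hpre,
    ← σ.image_eq_preimage_symm, hs]
  simp

theorem permOn_comp_permOn_eq_zero (h : Disjoint s (σ ⁻¹' t)) :
    b.permOn τ t ∘L b.permOn σ s = 0 := by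
  rw [permOn_comp_permOn, Set.disjoint_iff_inter_eq_empty.1 h, permOn_empty]

end HilbertBasis

section ShiftPair

variable {H : Type} [NormedAddCommGroup H] [InnerProductSpace ℂ H]
  (e : HilbertBasis (ℕ ⊕ ℕ) ℂ H) {T₁ T₂ : H →L[ℂ] H}

theorem subnormalPair_of_shift_inl_inr
    (hT₁l : ∀ n : ℕ, T₁ (e (Sum.inl n)) = e (Sum.inl (n + 1)))
    (hT₁r : ∀ n : ℕ, T₁ (e (Sum.inr n)) = 0)
    (hT₂l : ∀ n : ℕ, T₂ (e (Sum.inl n)) = 0)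
    (hT₂r : ∀ n : ℕ, T₂ (e (Sum.inr n)) = e (Sum.inr (n + 1))) :
    SubnormalPair T₁ T₂ := by
  let b : HilbertBasis (ℤ ⊕ ℤ) ℂ (lp (fun _ : ℤ ⊕ ℤ => ℂ) 2) := default
  let V := e.linearIsometryOfOrthonormal <| b.orthonormal.comp (Sum.map ((↑) : ℕ → ℤ) (↑))
    (Nat.cast_injective.sumMap Nat.cast_injective)
  let σ₁ : ℤ ⊕ ℤ ≃ ℤ ⊕ ℤ := (Equiv.addRight 1).sumCongr (Equiv.refl ℤ)
  let σ₂ : ℤ ⊕ ℤ ≃ ℤ ⊕ ℤ := (Equiv.refl ℤ).sumCongr (Equiv.addRight 1)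
  refine ⟨_, inferInstance, inferInstance, inferInstance, V.toContinuousLinearMap,
    b.permOn σ₁ (Set.range Sum.inl), b.permOn σ₂ (Set.range Sum.inr), V.isometry, ?_,
    b.commute_adjoint_permOn ?_, b.commute_adjoint_permOn ?_,
    e.ext_continuousLinearMap ?_, e.ext_continuousLinearMap ?_⟩
  · rw [b.permOn_comp_permOn_eq_zero, b.permOn_comp_permOn_eq_zero] <;>
      simp [Set.disjoint_left, σ₁, σ₂]
  · ext (n | n) <;> simp [σ₁]
  · ext (n | n) <;> simp [σ₂]
  · rintro (n | n) <;> simp [hT₁l, hT₁r, V, σ₁]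
  · rintro (n | n) <;> simp [hT₂l, hT₂r, V, σ₂]

theorem not_isStarNormal_of_shift_inl [CompleteSpace H]
    (hT₁l : ∀ n : ℕ, T₁ (e (Sum.inl n)) = e (Sum.inl (n + 1)))
    (hT₁r : ∀ n : ℕ, T₁ (e (Sum.inr n)) = 0) :
    ¬ IsStarNormal T₁ := fun hT => by
  have hadj : adjoint T₁ (e (Sum.inl 0)) = 0 := e.adjoint_apply_eq_zero fun i => by
    rcases i with n | n <;> simp [hT₁l, hT₁r, orthonormal_iff_ite.1 e.orthonormal]
  have hT₁ := (hT.adjoint_apply_eq_zero_iff _).1 hadj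
  rw [hT₁l] at hT₁
  exact e.orthonormal.ne_zero _ hT₁

end ShiftPair

/-- Example 4.3: the pair `(U₊ ⊕ 0, 0 ⊕ U₊)` is subnormal and all monomials
`T₁^m T₂^n` are normal (indeed zero), yet the pair is not normal. -/
theorem subnormal_pair_with_normal_monomials_not_normal
    {H : Type} [NormedAddCommGroup H] [InnerProductSpace ℂ H] [CompleteSpace H]
    (e : HilbertBasis (ℕ ⊕ ℕ) ℂ H) (T₁ T₂ : H →L[ℂ] H)
    (hT₁l : ∀ n : ℕ, T₁ (e (Sum.inl n)) = e (Sum.inl (n + 1)))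
    (hT₁r : ∀ n : ℕ, T₁ (e (Sum.inr n)) = 0)
    (hT₂l : ∀ n : ℕ, T₂ (e (Sum.inl n)) = 0)
    (hT₂r : ∀ n : ℕ, T₂ (e (Sum.inr n)) = e (Sum.inr (n + 1))) :
    T₁ * T₂ = T₂ * T₁ ∧ SubnormalPair T₁ T₂ ∧
      (∀ m n : ℕ, 1 ≤ m → 1 ≤ n → T₁ ^ m * T₂ ^ n = 0 ∧
        adjoint (T₁ ^ m * T₂ ^ n) * (T₁ ^ m * T₂ ^ n) =
          (T₁ ^ m * T₂ ^ n) * adjoint (T₁ ^ m * T₂ ^ n)) ∧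
      ¬ adjoint T₁ * T₁ = T₁ * adjoint T₁ := by
  have h₁₂ : T₁ * T₂ = 0 := e.ext_continuousLinearMap fun i => by
    rcases i with n | n <;> simp [hT₁r, hT₂l, hT₂r]
  have h₂₁ : T₂ * T₁ = 0 := e.ext_continuousLinearMap fun i => by
    rcases i with n | n <;> simp [hT₁l, hT₁r, hT₂l]
  refine ⟨h₁₂.trans h₂₁.symm, subnormalPair_of_shift_inl_inr e hT₁l hT₁r hT₂l hT₂r,
    fun m n hm hn => ?_, fun hT₁ => not_isStarNormal_of_shift_inl e hT₁l hT₁r ⟨hT₁⟩⟩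
  have hmn := pow_mul_pow_eq_zero_of_mul_eq_zero h₁₂ hm hn
  exact ⟨hmn, by simp [hmn]⟩
end
end

section
/- Let W_α be a subnormal unilateral weighted shift on ℓ²(ℤ₊) with positive weights (αₙ), fix an integer j ≥ 2, and let μ_j be the Berger measure of the restriction of W_α to the closed span L_j of {e_j, e_{j+1}, ⋯}, i.e., the compactly supported Borel probability measure on [0,∞) with ∫ tⁿ dμ_j(t) = (α_j α_{j+1}⋯α_{j+n−1})² for all n ≥ 1. Then 1/t is integrable with respect to μ_j and α_{j−1}² = ( ∫ (1/t) dμ_j(t) )^{−1}; in particular, α_{j−1} is completely determined by μ_j. -/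
open MeasureTheory ContinuousLinearMap
open scoped ComplexOrder ENNReal

noncomputable section

universe u

/-- The (possibly infinite) integral `∫ 1/t dμ` of the reciprocal function, computed in
`ℝ≥0∞` so that an atom of `μ` at `0` yields the value `∞`. -/
def recipIntegral (μ : Measure ℝ) : ℝ≥0∞ := ∫⁻ t, (ENNReal.ofReal t)⁻¹ ∂μ

/-!
If `ξ` is the Berger measure of `W_α` and `γₙ = α₀² ⋯ αₙ₋₁²`, then `t ^ j dξ(t) / γⱼ` has moments
`γⱼ₊ₙ / γⱼ = αⱼ² ⋯ αⱼ₊ₙ₋₁²`, those of the restriction to `L_j`. A measure supported in a compact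
interval is determined by its moments (Weierstrass approximation), so this measure is `μ_j`, and
`∫ 1/t dμ_j = ∫ t ^ (j - 1) dξ / γⱼ = γⱼ₋₁ / γⱼ = 1 / α_{j-1}²`.
-/

open Filter Set Polynomial

section MomentDeterminacy

variable {μ ν : Measure ℝ} {a b : ℝ}

lemma integrable_of_ae_mem_Icc [IsFiniteMeasure μ] (hμ : ∀ᵐ t ∂μ, t ∈ Icc a b) {g : ℝ → ℝ}
    (hg : Continuous g) : Integrable g μ := by
  rw [← Measure.restrict_eq_self_of_ae_mem hμ]
  exact hg.continuousOn.integrableOn_compact isCompact_Icc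

lemma integral_eval_eq_of_moments_eq [IsFiniteMeasure μ] [IsFiniteMeasure ν]
    (hμ : ∀ᵐ t ∂μ, t ∈ Icc a b) (hν : ∀ᵐ t ∂ν, t ∈ Icc a b)
    (hmom : ∀ n : ℕ, ∫ t, t ^ n ∂μ = ∫ t, t ^ n ∂ν) (p : ℝ[X]) :
    ∫ t, p.eval t ∂μ = ∫ t, p.eval t ∂ν := by
  induction p using Polynomial.induction_on' with
  | add p q hp hq =>
    simp only [eval_add]
    rw [integral_add (integrable_of_ae_mem_Icc hμ p.continuous)
        (integrable_of_ae_mem_Icc hμ q.continuous),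
      integral_add (integrable_of_ae_mem_Icc hν p.continuous)
        (integrable_of_ae_mem_Icc hν q.continuous), hp, hq]
  | monomial n r =>
    simp only [eval_monomial]
    rw [integral_const_mul, integral_const_mul, hmom n]

lemma dist_integral_le_of_ae_dist_le [IsFiniteMeasure μ] {f g : ℝ → ℝ} (hf : Integrable f μ)
    (hg : Integrable g μ) {δ : ℝ} (h : ∀ᵐ t ∂μ, dist (f t) (g t) ≤ δ) :
    dist (∫ t, f t ∂μ) (∫ t, g t ∂μ) ≤ δ * μ.real univ := by
  rw [dist_eq_norm, ← integral_sub hf hg]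
  exact norm_integral_le_of_norm_le_const (by simpa only [dist_eq_norm] using h)

theorem Measure.ext_of_moments_eq [IsFiniteMeasure μ] [IsFiniteMeasure ν]
    (hμ : ∀ᵐ t ∂μ, t ∈ Icc a b) (hν : ∀ᵐ t ∂ν, t ∈ Icc a b)
    (hmom : ∀ n : ℕ, ∫ t, t ^ n ∂μ = ∫ t, t ^ n ∂ν) : μ = ν := by
  refine ext_of_forall_integral_eq_of_IsFiniteMeasure fun f => eq_of_forall_dist_le fun ε hε => ?_
  set C := μ.real univ + ν.real univ + 1
  have hC : 0 < C := by positivity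
  obtain ⟨p, hp⟩ := exists_polynomial_near_of_continuousOn a b f f.continuous.continuousOn
    (ε / C) (by positivity)
  have approx : ∀ ρ : Measure ℝ, [IsFiniteMeasure ρ] → (∀ᵐ t ∂ρ, t ∈ Icc a b) →
      dist (∫ t, f t ∂ρ) (∫ t, p.eval t ∂ρ) ≤ ε / C * ρ.real univ := fun ρ _ hρ =>
    dist_integral_le_of_ae_dist_le (integrable_of_ae_mem_Icc hρ f.continuous)
      (integrable_of_ae_mem_Icc hρ p.continuous)
      (hρ.mono fun t ht => by rw [dist_comm]; exact (hp t ht).le)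
  calc dist (∫ t, f t ∂μ) (∫ t, f t ∂ν)
      ≤ dist (∫ t, f t ∂μ) (∫ t, p.eval t ∂μ) + dist (∫ t, f t ∂ν) (∫ t, p.eval t ∂ν) := by
        rw [integral_eval_eq_of_moments_eq hμ hν hmom, dist_comm (∫ t, f t ∂ν)]
        exact dist_triangle _ _ _
    _ ≤ ε / C * μ.real univ + ε / C * ν.real univ := add_le_add (approx μ hμ) (approx ν hν)
    _ ≤ ε := by
        rw [← mul_add, div_mul_eq_mul_div, div_le_iff₀ hC]
        exact mul_le_mul_of_nonneg_left (by linarith) hε.le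

end MomentDeterminacy

lemma ENNReal.pow_succ_mul_inv_self {x : ℝ≥0∞} (hx : x ≠ ⊤) {n : ℕ} (hn : n ≠ 0) :
    x ^ (n + 1) * x⁻¹ = x ^ n := by
  rcases eq_or_ne x 0 with rfl | hx₀
  · simp [hn]
  · rw [pow_succ, mul_assoc, ENNReal.mul_inv_cancel hx₀ hx, mul_one]

def shiftMoment (c : ℕ → ℝ) (n : ℕ) : ℝ := ∏ i ∈ Finset.range n, c i ^ 2

lemma shiftMoment_add (c : ℕ → ℝ) (j n : ℕ) :
    shiftMoment c (j + n) = shiftMoment c j * shiftMoment (fun i => c (j + i)) n :=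
  Finset.prod_range_add _ j n

lemma shiftMoment_succ (c : ℕ → ℝ) (n : ℕ) : shiftMoment c (n + 1) = shiftMoment c n * c n ^ 2 :=
  Finset.prod_range_succ _ n

lemma shiftMoment_pos {c : ℕ → ℝ} {n : ℕ} (hc : ∀ i < n, c i ≠ 0) : 0 < shiftMoment c n :=
  Finset.prod_pos fun i hi => sq_pos_of_ne_zero (hc i (Finset.mem_range.mp hi))

namespace IsBergerMeasure

variable {c : ℕ → ℝ} {μ ν : Measure ℝ}

lemma ae_nonneg (h : IsBergerMeasure c μ) : ∀ᵐ t ∂μ, 0 ≤ t := by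
  simpa only [ae_iff, not_le] using h.2.1

lemma eventually_ae_mem_Icc (h : IsBergerMeasure c μ) : ∀ᶠ M in atTop, ∀ᵐ t ∂μ, t ∈ Icc 0 M := by
  obtain ⟨M₀, hM₀⟩ := h.2.2.1
  have hle : ∀ᵐ t ∂μ, t ≤ M₀ := by simpa only [ae_iff, not_le] using hM₀
  filter_upwards [eventually_ge_atTop M₀] with M hM
  filter_upwards [h.ae_nonneg, hle] with t h0 ht using ⟨h0, ht.trans hM⟩

lemma integral_pow (h : IsBergerMeasure c μ) (n : ℕ) : ∫ t, t ^ n ∂μ = shiftMoment c n := by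
  rcases Nat.eq_zero_or_pos n with rfl | hn
  · have := h.1
    simp [shiftMoment]
  · exact h.2.2.2 n hn

lemma lintegral_ofReal_pow (h : IsBergerMeasure c μ) (n : ℕ) :
    ∫⁻ t, ENNReal.ofReal (t ^ n) ∂μ = ENNReal.ofReal (shiftMoment c n) := by
  have := h.1
  obtain ⟨M, hM⟩ := h.eventually_ae_mem_Icc.exists
  rw [← h.integral_pow, ofReal_integral_eq_lintegral_ofReal
    (integrable_of_ae_mem_Icc hM (continuous_pow n))]
  filter_upwards [h.ae_nonneg] with t ht using pow_nonneg ht n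

theorem unique (hμ : IsBergerMeasure c μ) (hν : IsBergerMeasure c ν) : μ = ν := by
  have := hμ.1
  have := hν.1
  obtain ⟨M, hμM, hνM⟩ := (hμ.eventually_ae_mem_Icc.and hν.eventually_ae_mem_Icc).exists
  exact Measure.ext_of_moments_eq hμM hνM fun n => by rw [hμ.integral_pow, hν.integral_pow]

end IsBergerMeasure

def restrictedBergerMeasure (c : ℕ → ℝ) (ξ : Measure ℝ) (j : ℕ) : Measure ℝ :=
  (ENNReal.ofReal (shiftMoment c j))⁻¹ • ξ.withDensity fun t => ENNReal.ofReal (t ^ j)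

section restrictedBergerMeasure

variable {c : ℕ → ℝ} {ξ : Measure ℝ} {j : ℕ}

lemma restrictedBergerMeasure_absolutelyContinuous : restrictedBergerMeasure c ξ j ≪ ξ :=
  (withDensity_absolutelyContinuous ξ _).smul_left _

lemma lintegral_ofReal_pow_restrictedBergerMeasure (hξ : IsBergerMeasure c ξ)
    (hc : ∀ i < j, c i ≠ 0) (n : ℕ) :
    ∫⁻ t, ENNReal.ofReal (t ^ n) ∂restrictedBergerMeasure c ξ j =
      ENNReal.ofReal (shiftMoment (fun i => c (j + i)) n) := by
  have hγ := shiftMoment_pos hc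
  have hpow : ∀ᵐ t ∂ξ, ENNReal.ofReal (t ^ j) * ENNReal.ofReal (t ^ n) =
      ENNReal.ofReal (t ^ (j + n)) := by
    filter_upwards [hξ.ae_nonneg] with t ht
    rw [← ENNReal.ofReal_mul (pow_nonneg ht j), pow_add]
  rw [restrictedBergerMeasure, lintegral_smul_measure, lintegral_withDensity_eq_lintegral_mul _
      (by fun_prop) (by fun_prop)]
  simp only [Pi.mul_apply]
  rw [lintegral_congr_ae hpow, hξ.lintegral_ofReal_pow, shiftMoment_add, ENNReal.ofReal_mul hγ.le,
    smul_eq_mul, ← mul_assoc,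
    ENNReal.inv_mul_cancel (ENNReal.ofReal_pos.mpr hγ).ne' ENNReal.ofReal_ne_top, one_mul]

theorem isBergerMeasure_restrictedBergerMeasure (hξ : IsBergerMeasure c ξ)
    (hc : ∀ i < j, c i ≠ 0) :
    IsBergerMeasure (fun n => c (j + n)) (restrictedBergerMeasure c ξ j) := by
  have hmom := lintegral_ofReal_pow_restrictedBergerMeasure hξ hc
  have hnonneg : ∀ᵐ t ∂restrictedBergerMeasure c ξ j, 0 ≤ t :=
    restrictedBergerMeasure_absolutelyContinuous.ae_le hξ.ae_nonneg
  refine ⟨⟨by simpa [shiftMoment] using hmom 0⟩,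
    restrictedBergerMeasure_absolutelyContinuous hξ.2.1,
    hξ.2.2.1.imp fun M hM => restrictedBergerMeasure_absolutelyContinuous hM, fun n _ => ?_⟩
  rw [integral_eq_lintegral_of_nonneg_ae (hnonneg.mono fun t ht => pow_nonneg ht n)
    (by fun_prop), hmom, ENNReal.toReal_ofReal (by unfold shiftMoment; positivity), shiftMoment]

lemma recipIntegral_restrictedBergerMeasure {n : ℕ} (hξ : IsBergerMeasure c ξ)
    (hc : ∀ i < n, c i ≠ 0) (hn : n ≠ 0) :
    recipIntegral (restrictedBergerMeasure c ξ (n + 1)) = (ENNReal.ofReal (c n ^ 2))⁻¹ := by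
  have hγ := shiftMoment_pos hc
  have hγ₀ : ENNReal.ofReal (shiftMoment c n) ≠ 0 := (ENNReal.ofReal_pos.mpr hγ).ne'
  have hpow : ∀ᵐ t ∂ξ, ENNReal.ofReal (t ^ (n + 1)) * (ENNReal.ofReal t)⁻¹ =
      ENNReal.ofReal (t ^ n) := by
    filter_upwards [hξ.ae_nonneg] with t ht
    rw [ENNReal.ofReal_pow ht, ENNReal.ofReal_pow ht,
      ENNReal.pow_succ_mul_inv_self ENNReal.ofReal_ne_top hn]
  rw [recipIntegral, restrictedBergerMeasure, lintegral_smul_measure,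
    lintegral_withDensity_eq_lintegral_mul _ (by fun_prop) (by fun_prop)]
  simp only [Pi.mul_apply]
  rw [lintegral_congr_ae hpow, hξ.lintegral_ofReal_pow, shiftMoment_succ,
    ENNReal.ofReal_mul hγ.le, ENNReal.mul_inv (Or.inl hγ₀) (Or.inl ENNReal.ofReal_ne_top),
    smul_eq_mul, mul_comm (ENNReal.ofReal (shiftMoment c n))⁻¹, mul_assoc,
    ENNReal.inv_mul_cancel hγ₀ ENNReal.ofReal_ne_top, mul_one]

end restrictedBergerMeasure

theorem weight_determined_by_restricted_berger_measure_general
    (α : ℕ → ℝ) (hαpos : ∀ n, 0 < α n)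
    (hsub : ∃ ξ : Measure ℝ, IsBergerMeasure α ξ)
    (j : ℕ) (hj : 2 ≤ j)
    (μj : Measure ℝ) (hμj : IsBergerMeasure (fun n => α (j + n)) μj) :
    recipIntegral μj ≠ ⊤ ∧ (α (j - 1)) ^ 2 = ((recipIntegral μj).toReal)⁻¹ := by
  obtain ⟨ξ, hξ⟩ := hsub
  obtain ⟨n, rfl⟩ : ∃ n, j = n + 1 := ⟨j - 1, by omega⟩
  have hα : ∀ i, α i ≠ 0 := fun i => (hαpos i).ne'
  rw [hμj.unique (isBergerMeasure_restrictedBergerMeasure hξ fun i _ => hα i),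
    recipIntegral_restrictedBergerMeasure hξ (fun i _ => hα i) (by omega), Nat.add_sub_cancel]
  have hα₀ : ENNReal.ofReal (α n ^ 2) ≠ 0 := (ENNReal.ofReal_pos.mpr (pow_pos (hαpos n) 2)).ne'
  exact ⟨ENNReal.inv_ne_top.mpr hα₀, by
    rw [ENNReal.toReal_inv, ENNReal.toReal_ofReal (sq_nonneg _), inv_inv]⟩

/-- Corollary 3.2: for a subnormal unilateral weighted shift, the weight `α_{j-1}` is
completely determined by the Berger measure of the restriction to `L_j`, via
`α_{j-1}² = (∫ 1/t dμ_j)⁻¹`. -/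
theorem weight_determined_by_restricted_berger_measure
    (α : ℕ → ℝ) (hαpos : ∀ n, 0 < α n) (hαbdd : ∃ C : ℝ, ∀ n, α n ≤ C)
    (hsub : ∃ ξ : Measure ℝ, IsBergerMeasure α ξ)
    (j : ℕ) (hj : 2 ≤ j)
    (μj : Measure ℝ) (hμj : IsBergerMeasure (fun n => α (j + n)) μj) :
    recipIntegral μj ≠ ⊤ ∧ (α (j - 1)) ^ 2 = ((recipIntegral μj).toReal)⁻¹ :=
  weight_determined_by_restricted_berger_measure_general α hαpos hsub j hj μj hμj

end
end
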